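/- Soundness of C₁ᴰ with respect to swap Kripke models: for every set of formulas Γ ∪ {φ} ⊆ For(Σ₁ᴰ), if Γ ⊢_{C₁ᴰ} φ then Γ ⊨_{C₁ᴰ} φ. -/

import Mathlib

/-- Formulas over the signature Σ₁ᴰ = {∧, ∨, →, ¬, O}, with countably many
propositional variables. -/
inductive Form : Type
  | var : ℕ → Form
  | and : Form → Form → Form
  | or : Form → Form → Form
  | imp : Form → Form → Form
  | neg : Form → Form
  | obl : Form → Form

namespace Form
/-- α° := ¬(α ∧ ¬α) -/
def cons (α : Form) : Form := (α.and α.neg).neg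
/-- ⊥_α := (α ∧ ¬α) ∧ α° -/
def bot (α : Form) : Form := (α.and α.neg).and α.cons
end Form

/-- Theorems of C₁ᴰ: CPL⁺ axioms, (EM), (cf), (bc)', (ca_#)' for # ∈ {∧,∨,→},
(ca_O)', (O-K), (O-E), with rules Modus Ponens and O-necessitation. -/
inductive ThmC1D : Form → Prop
  | A1 (α β : Form) : ThmC1D (α.imp (β.imp α))
  | A2 (α β γ : Form) : ThmC1D ((α.imp (β.imp γ)).imp ((α.imp β).imp (α.imp γ)))
  | A3 (α β : Form) : ThmC1D (α.imp (β.imp (α.and β)))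
  | A4 (α β : Form) : ThmC1D ((α.and β).imp α)
  | A5 (α β : Form) : ThmC1D ((α.and β).imp β)
  | A6 (α β : Form) : ThmC1D (α.imp (α.or β))
  | A7 (α β : Form) : ThmC1D (β.imp (α.or β))
  | A8 (α β γ : Form) : ThmC1D ((α.imp γ).imp ((β.imp γ).imp ((α.or β).imp γ)))
  | A9 (α β : Form) : ThmC1D (((α.imp β).imp α).imp α)
  | EM (α : Form) : ThmC1D (α.or α.neg)
  | cf (α : Form) : ThmC1D (α.neg.neg.imp α)
  | bc' (α β : Form) : ThmC1D (α.cons.imp (α.imp (α.neg.imp β)))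
  | caAnd' (α β : Form) : ThmC1D ((α.cons.and β.cons).imp (α.and β).cons)
  | caOr' (α β : Form) : ThmC1D ((α.cons.and β.cons).imp (α.or β).cons)
  | caImp' (α β : Form) : ThmC1D ((α.cons.and β.cons).imp (α.imp β).cons)
  | caO' (α : Form) : ThmC1D (α.cons.imp α.obl.cons)
  | OK (α β : Form) : ThmC1D ((α.imp β).obl.imp (α.obl.imp β.obl))
  | OE (α : Form) : ThmC1D (α.bot.obl.imp α.bot)
  | mp {α β : Form} : ThmC1D (α.imp β) → ThmC1D α → ThmC1D β
  | nec {α : Form} : ThmC1D α → ThmC1D α.obl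

/-- conj γ [γ₂,…,γ_k] = γ ∧ γ₂ ∧ … ∧ γ_k -/
def conj (γ : Form) : List Form → Form
  | [] => γ
  | δ :: l => γ.and (conj δ l)

/-- Γ ⊢_{C₁ᴰ} φ iff ⊢ φ or ⊢ (γ₁ ∧ … ∧ γ_k) → φ for some γ₁,…,γ_k ∈ Γ, k ≥ 1. -/
def DerivC1D (Γ : Set Form) (φ : Form) : Prop :=
  ThmC1D φ ∨ ∃ (γ : Form) (l : List Form),
    (∀ δ ∈ γ :: l, δ ∈ Γ) ∧ ThmC1D ((conj γ l).imp φ)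

/-- The three snapshots T = (1,0), t = (1,1), F = (0,1). -/
inductive SV : Type
  | T | t | F
deriving DecidableEq

/-- First coordinate of a snapshot. -/
def SV.p1 : SV → Bool
  | .T => true | .t => true | .F => false

/-- Second coordinate of a snapshot. -/
def SV.p2 : SV → Bool
  | .T => false | .t => true | .F => true

/-- Designated values: D = {T, t}, i.e. first coordinate is 1. -/
def SV.desig (a : SV) : Prop := a.p1 = true

/-- The Boolean (classical) snapshots {T, F}. -/
def SV.boo (a : SV) : Prop := a = SV.T ∨ a = SV.F

/-- Swap Kripke model conditions for C₁ᴰ on a serial frame (W,R):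
¬ is interpreted by ¬̃₁, O by Õ, and the valuations satisfy the DCila
restrictions together with: v_w(α) ∈ {T,F} implies v_w(Oα) ∈ {T,F}. -/
structure IsModelC1D {W : Type} (R : W → W → Prop) (v : W → Form → SV) : Prop where
  serial : ∀ w, ∃ w', R w w'
  and_ : ∀ w α β, (v w (α.and β)).p1 = ((v w α).p1 && (v w β).p1)
  or_ : ∀ w α β, (v w (α.or β)).p1 = ((v w α).p1 || (v w β).p1)
  imp_ : ∀ w α β, (v w (α.imp β)).p1 = (!(v w α).p1 || (v w β).p1)
  neg_ : ∀ w α, (v w α.neg).p1 = (v w α).p2 ∧ (v w α.neg).p2 ≤ (v w α).p1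
  obl_ : ∀ w α, ((v w α.obl).p1 = true ↔ ∀ w', R w w' → (v w' α).p1 = true)
  cl_ : ∀ w α, v w α = SV.t → v w (α.and α.neg) = SV.T
  booAnd : ∀ w α β, (v w α).boo → (v w β).boo → (v w (α.and β)).boo
  booOr : ∀ w α β, (v w α).boo → (v w β).boo → (v w (α.or β)).boo
  booImp : ∀ w α β, (v w α).boo → (v w β).boo → (v w (α.imp β)).boo
  booObl : ∀ w α, (v w α).boo → (v w α.obl).boo

/-- Γ ⊨_{C₁ᴰ} φ : semantic consequence over all swap Kripke models for C₁ᴰ. -/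
def SemC1D (Γ : Set Form) (φ : Form) : Prop :=
  ∀ (W : Type) (R : W → W → Prop) (v : W → Form → SV), Nonempty W →
    IsModelC1D R v → ∀ w : W, (∀ γ ∈ Γ, (v w γ).desig) → (v w φ).desig

/-! Every theorem of C₁ᴰ is designated at every world of every swap Kripke model.
The first coordinates of `∧`, `∨`, `→` are computed classically and `O` acts as a box over
a serial relation, so the positive axioms, (O-K) and the rules are Boolean facts. The
paraconsistent axioms rest on one computation: `α°` is designated exactly when `v(α) ≠ t`,
since `v(α) = t` forces `v(α ∧ ¬α) = T`, while otherwise `α ∧ ¬α` has first coordinate `0`,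
hence value `F`. In particular `⊥_α` is never designated, which with seriality gives (O-E). -/

namespace SV

lemma p1_or_p2 (a : SV) : (a.p1 || a.p2) = true := by
  cases a <;> rfl

lemma eq_F_iff {a : SV} : a = F ↔ a.p1 = false := by
  cases a <;> decide

lemma eq_t_iff {a : SV} : a = t ↔ (a.p1 && a.p2) = true := by
  cases a <;> decide

lemma boo_iff {a : SV} : a.boo ↔ (a.p1 && a.p2) = false := by
  cases a <;> simp [boo, p1, p2]

end SV

namespace IsModelC1D

variable {W : Type} {R : W → W → Prop} {v : W → Form → SV} (hm : IsModelC1D R v)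
include hm

lemma p1_imp_iff {w : W} {α β : Form} :
    (v w (α.imp β)).p1 = true ↔ ((v w α).p1 = true → (v w β).p1 = true) := by
  rw [hm.imp_]
  cases (v w α).p1 <;> simp

lemma p1_cons (w : W) (α : Form) : (v w α.cons).p1 = !((v w α).p1 && (v w α).p2) := by
  rw [Form.cons, (hm.neg_ w _).1]
  cases h : ((v w α).p1 && (v w α).p2)
  · have hF : v w (α.and α.neg) = .F := by
      rw [SV.eq_F_iff, hm.and_, (hm.neg_ w α).1, h]
    rw [hF]; rfl
  · rw [hm.cl_ w α (SV.eq_t_iff.2 h)]; rfl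

lemma p1_cons_iff_boo {w : W} {α : Form} : (v w α.cons).p1 = true ↔ (v w α).boo := by
  rw [hm.p1_cons, SV.boo_iff, Bool.not_eq_true']

lemma p1_bot (w : W) (α : Form) : (v w α.bot).p1 = false := by
  rw [Form.bot, hm.and_, hm.and_, (hm.neg_ w α).1, hm.p1_cons]
  cases (v w α).p1 && (v w α).p2 <;> rfl

lemma p1_ca_of_preserves_boo (f : Form → Form → Form)
    (hf : ∀ w α β, (v w α).boo → (v w β).boo → (v w (f α β)).boo) (w : W) (α β : Form) :
    (v w ((α.cons.and β.cons).imp (f α β).cons)).p1 = true := by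
  rw [hm.p1_imp_iff, hm.and_, Bool.and_eq_true, hm.p1_cons_iff_boo, hm.p1_cons_iff_boo,
    hm.p1_cons_iff_boo]
  exact fun ⟨hα, hβ⟩ => hf w α β hα hβ

theorem p1_of_thm {φ : Form} (hφ : ThmC1D φ) (w : W) : (v w φ).p1 = true := by
  induction hφ generalizing w with
  | A1 | A2 | A3 | A4 | A5 | A6 | A7 | A8 | A9 =>
    simp only [hm.imp_, hm.and_, hm.or_]
    grind
  | EM α => rw [hm.or_, (hm.neg_ w α).1, SV.p1_or_p2]
  | cf α =>
    refine hm.p1_imp_iff.2 fun h => ?_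
    rw [(hm.neg_ w α.neg).1] at h
    exact Bool.eq_true_of_true_le (h ▸ (hm.neg_ w α).2)
  | bc' α β =>
    refine hm.p1_imp_iff.2 fun hc => hm.p1_imp_iff.2 fun hα => ?_
    refine hm.p1_imp_iff.2 fun hn => ?_
    rw [hm.p1_cons, hα] at hc
    rw [(hm.neg_ w α).1] at hn
    simp_all
  | caAnd' => exact hm.p1_ca_of_preserves_boo _ hm.booAnd w _ _
  | caOr' => exact hm.p1_ca_of_preserves_boo _ hm.booOr w _ _
  | caImp' => exact hm.p1_ca_of_preserves_boo _ hm.booImp w _ _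
  | caO' α =>
    refine hm.p1_imp_iff.2 fun hc => ?_
    exact hm.p1_cons_iff_boo.2 (hm.booObl w α (hm.p1_cons_iff_boo.1 hc))
  | OK α β =>
    refine hm.p1_imp_iff.2 fun hαβ => hm.p1_imp_iff.2 fun hα => ?_
    refine (hm.obl_ w β).2 fun w' hw' => ?_
    exact hm.p1_imp_iff.1 ((hm.obl_ w _).1 hαβ w' hw') ((hm.obl_ w α).1 hα w' hw')
  | OE α =>
    refine hm.p1_imp_iff.2 fun h => ?_
    obtain ⟨w', hw'⟩ := hm.serial w
    simpa [hm.p1_bot] using (hm.obl_ w _).1 h w' hw'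
  | mp _ _ ihαβ ihα => exact hm.p1_imp_iff.1 (ihαβ w) (ihα w)
  | nec _ ih => exact (hm.obl_ w _).2 fun w' _ => ih w'

lemma p1_conj (w : W) (γ : Form) (l : List Form) :
    (v w (conj γ l)).p1 = true ↔ ∀ δ ∈ γ :: l, (v w δ).p1 = true := by
  induction l generalizing γ with
  | nil => simp [conj]
  | cons δ l ih => simp [conj, hm.and_, ih]

end IsModelC1D

/-- Soundness of C₁ᴰ w.r.t. swap Kripke models. -/
theorem C1D_soundness (Γ : Set Form) (φ : Form) :
    DerivC1D Γ φ → SemC1D Γ φ := by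
  rintro (hφ | ⟨γ, l, hΓ, hφ⟩) W R v - hm w hw
  · exact hm.p1_of_thm hφ w
  · have hΓw : (v w (conj γ l)).p1 = true :=
      (hm.p1_conj w γ l).2 fun δ hδ => hw δ (hΓ δ hδ)
    exact hm.p1_imp_iff.1 (hm.p1_of_thm hφ w) hΓw
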